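/- Let r and r̂ be positive integers, and suppose Γ = Γ₀ × Γ₁ with Γ₀ ≅ H(r), Γ₁ ≅ ℤ, is a normal subgroup of Γ̂ = Γ̂₀ × Γ̂₁ with Γ̂₀ ≅ H(r̂), Γ̂₁ ≅ ℤ. Then the quotient group G = Γ̂/Γ is finite and has a normal abelian subgroup of index at most r. -/

import Mathlib

/-- The "discrete Heisenberg group" H(r): the group with presentation
⟨δ₁, δ₂, δ₃ ∣ [δ₁,δ₃] = [δ₂,δ₃] = 1, [δ₁,δ₂] = δ₃^r⟩, realized concretely as the
group of upper unitriangular 3×3 rational matrices with (1,2)-entry `a ∈ ℤ`,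
(2,3)-entry `b ∈ ℤ` and (1,3)-entry `c/r` with `c ∈ ℤ`; the element ⟨a, b, c⟩
corresponds to δ₁^a δ₂^b (δ₃-part c), with δ₁ = ⟨1,0,0⟩, δ₂ = ⟨0,1,0⟩,
δ₃ = ⟨0,0,1⟩. -/
@[ext]
structure Heis (r : ℕ) : Type where
  a : ℤ
  b : ℤ
  c : ℤ

namespace Heis

variable {r : ℕ}

instance : Mul (Heis r) :=
  ⟨fun x y => ⟨x.a + y.a, x.b + y.b, x.c + y.c + r * x.a * y.b⟩⟩

instance : One (Heis r) := ⟨⟨0, 0, 0⟩⟩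

instance : Inv (Heis r) :=
  ⟨fun x => ⟨-x.a, -x.b, -x.c + r * x.a * x.b⟩⟩

@[simp] lemma mul_a (x y : Heis r) : (x * y).a = x.a + y.a := rfl
@[simp] lemma mul_b (x y : Heis r) : (x * y).b = x.b + y.b := rfl
@[simp] lemma mul_c (x y : Heis r) : (x * y).c = x.c + y.c + r * x.a * y.b := rfl
@[simp] lemma one_a : (1 : Heis r).a = 0 := rfl
@[simp] lemma one_b : (1 : Heis r).b = 0 := rfl
@[simp] lemma one_c : (1 : Heis r).c = 0 := rfl
@[simp] lemma inv_a (x : Heis r) : x⁻¹.a = -x.a := rfl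
@[simp] lemma inv_b (x : Heis r) : x⁻¹.b = -x.b := rfl
@[simp] lemma inv_c (x : Heis r) : x⁻¹.c = -x.c + r * x.a * x.b := rfl

instance instGroup : Group (Heis r) where
  mul_assoc x y z := by ext <;> simp <;> ring
  one_mul x := by ext <;> simp
  mul_one x := by ext <;> simp
  inv_mul_cancel x := by ext <;> simp <;> ring

/-- The generator δ₁ of H(r). -/
def δ₁ : Heis r := ⟨1, 0, 0⟩

/-- The generator δ₂ of H(r). -/
def δ₂ : Heis r := ⟨0, 1, 0⟩

/-- The generator δ₃ of H(r); it generates the center of H(r) (for r > 0). -/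
def δ₃ : Heis r := ⟨0, 0, 1⟩

end Heis

/-!
Let `Φ : H(r) × ℤ → H(r̂) × ℤ` be the embedding with image `K`. In `H(n) × ℤ` commutators are
central, `⁅x, y⁆ = (0, 0, n · det (x, y), 0)` with `det` the determinant of the `(a, b)`-coordinates.
As `⁅δ₁, δ₂⁆ = δ₃ ^ r`, injectivity gives `D = det (Φ δ₁, Φ δ₂) ≠ 0`, so only central elements
commute with `Φ δ₁` and `Φ δ₂`. Hence `Φ` maps the centre `ℤ²` into the centre by a triangular
matrix `[[c₀, qc], [0, qt]]` with `r c₀ = r̂ D` and `qt ≠ 0`, and `K` contains elements reducing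
each of the four coordinates modulo a nonzero number: `Γ̂ / K` is finite.

The central elements of `K` with trivial `ℤ`-coordinate are the multiples of `(0, 0, c₀, 0)`.
By normality `K` contains `⁅w, x⁆` for `w ∈ K`, so `c₀ ∣ r̂ a(w)` and `c₀ ∣ r̂ b(w)`, i.e.
`D ∣ r a(w)`. The `b`-coordinates of `K` form `N ℤ` with `N = gcd (b(Φ δ₁), b(Φ δ₂))`, and
`gcd (a(Φ δ₁), a(Φ δ₂)) · N ∣ D` then forces `N ∣ r`. The kernel of `b mod N` on `Γ̂ / K` has
index at most `N`, and it is abelian since the commutators of its elements lie in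
`r̂ N ℤ ⊆ c₀ ℤ ⊆ K`.
-/

open Multiplicative
open scoped commutatorElement

namespace Heis

variable {n : ℕ}

@[simp] lemma zpow_a (x : Heis n) (m : ℤ) : (x ^ m).a = m * x.a := by
  induction m using Int.induction_on with
  | zero => simp
  | succ k ih => rw [zpow_add_one, mul_a, ih]; ring
  | pred k ih => rw [zpow_sub_one, mul_a, inv_a, ih]; ring

@[simp] lemma zpow_b (x : Heis n) (m : ℤ) : (x ^ m).b = m * x.b := by
  induction m using Int.induction_on with
  | zero => simp
  | succ k ih => rw [zpow_add_one, mul_b, ih]; ring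
  | pred k ih => rw [zpow_sub_one, mul_b, inv_b, ih]; ring

lemma δ₁_zpow (m : ℤ) : (δ₁ : Heis n) ^ m = ⟨m, 0, 0⟩ := by
  induction m using Int.induction_on with
  | zero => rfl
  | succ k ih => rw [zpow_add_one, ih]; ext <;> simp [δ₁]
  | pred k ih => rw [zpow_sub_one, ih]; ext <;> simp [δ₁, sub_eq_add_neg]

lemma δ₂_zpow (m : ℤ) : (δ₂ : Heis n) ^ m = ⟨0, m, 0⟩ := by
  induction m using Int.induction_on with
  | zero => rfl
  | succ k ih => rw [zpow_add_one, ih]; ext <;> simp [δ₂]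
  | pred k ih => rw [zpow_sub_one, ih]; ext <;> simp [δ₂, sub_eq_add_neg]

lemma commutatorElement_eq (x y : Heis n) :
    ⁅x, y⁆ = ⟨0, 0, n * (x.a * y.b - x.b * y.a)⟩ := by
  rw [commutatorElement_def]; ext <;> simp; ring

end Heis

lemma Subgroup.commutatorElement_mem_of_normal {G : Type*} [Group G] {K : Subgroup G} [K.Normal]
    {w : G} (hw : w ∈ K) (x : G) : ⁅w, x⁆ ∈ K :=
  Subgroup.commutator_le_left K ⊤ (Subgroup.commutator_mem_commutator hw (Subgroup.mem_top x))

lemma QuotientGroup.finite_of_forall_exists_mul_mem {G : Type*} [Group G] (K : Subgroup G)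
    {S : Set G} (hS : S.Finite) (h : ∀ g, ∃ k ∈ K, g * k ∈ S) : Finite (G ⧸ K) := by
  have := hS.to_subtype
  refine Finite.of_surjective (fun s : S => (s : G ⧸ K)) fun x => ?_
  obtain ⟨g, rfl⟩ := QuotientGroup.mk_surjective x
  obtain ⟨k, hk, hgk⟩ := h g
  exact ⟨⟨g * k, hgk⟩, QuotientGroup.mk_mul_of_mem g hk⟩

lemma Int.exists_add_mul_mem_Ico (x : ℤ) {d : ℤ} (hd : d ≠ 0) :
    ∃ m : ℤ, x + m * d ∈ Set.Ico 0 (d.natAbs : ℤ) :=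
  ⟨-(x / d), by
    rw [show x + -(x / d) * d = x % d by rw [Int.emod_def]; ring]
    exact ⟨Int.emod_nonneg x hd, Int.emod_lt x hd⟩⟩

lemma Int.gcd_dvd_of_det_dvd_mul {a₁ b₁ a₂ b₂ r : ℤ} (hD : a₁ * b₂ - b₁ * a₂ ≠ 0)
    (h₁ : a₁ * b₂ - b₁ * a₂ ∣ r * a₁) (h₂ : a₁ * b₂ - b₁ * a₂ ∣ r * a₂) :
    (Int.gcd b₁ b₂ : ℤ) ∣ r := by
  set g : ℤ := (Int.gcd a₁ a₂ : ℤ) with hg_def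
  have hg : g ≠ 0 := fun h => hD <| by
    obtain ⟨rfl, rfl⟩ := Int.gcd_eq_zero_iff.mp (Int.natCast_eq_zero.mp h)
    ring
  have hgD : g * Int.gcd b₁ b₂ ∣ a₁ * b₂ - b₁ * a₂ :=
    dvd_sub (mul_dvd_mul (Int.gcd_dvd_left _ _) (Int.gcd_dvd_right _ _))
      (mul_comm a₂ b₁ ▸ mul_dvd_mul (Int.gcd_dvd_right _ _) (Int.gcd_dvd_left _ _))
  have hDg : a₁ * b₂ - b₁ * a₂ ∣ g * r := by
    rw [show g * r = r * a₁ * Int.gcdA a₁ a₂ + r * a₂ * Int.gcdB a₁ a₂ by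
      rw [hg_def, Int.gcd_eq_gcd_ab]; ring]
    exact dvd_add (h₁.mul_right _) (h₂.mul_right _)
  exact (mul_dvd_mul_iff_left hg).mp (hgD.trans hDg)

abbrev HeisZ (n : ℕ) : Type := Heis n × Multiplicative ℤ

namespace HeisZ

variable {n : ℕ}

def δ₁ : HeisZ n := (Heis.δ₁, 1)

def δ₂ : HeisZ n := (Heis.δ₂, 1)

def central (c t : ℤ) : HeisZ n := (⟨0, 0, c⟩, ofAdd t)

def det (x y : HeisZ n) : ℤ := x.1.a * y.1.b - x.1.b * y.1.a

@[simp] lemma central_fst (c t : ℤ) : (central c t : HeisZ n).1 = ⟨0, 0, c⟩ := rfl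

@[simp] lemma toAdd_central_snd (c t : ℤ) : toAdd (central c t : HeisZ n).2 = t := rfl

@[simp] lemma central_inj {c t c' t' : ℤ} :
    (central c t : HeisZ n) = central c' t' ↔ c = c' ∧ t = t' := by
  simp [central, Heis.ext_iff]

lemma central_one : (central 0 0 : HeisZ n) = 1 := rfl

lemma central_mul (c t c' t' : ℤ) :
    (central c t * central c' t' : HeisZ n) = central (c + c') (t + t') := by
  ext <;> simp [central]

lemma central_zpow (c t m : ℤ) : (central c t : HeisZ n) ^ m = central (m * c) (m * t) := by
  induction m using Int.induction_on with
  | zero => simp [central_one]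
  | succ k ih => rw [zpow_add_one, ih, central_mul]; congr 1 <;> ring
  | pred k ih =>
    rw [zpow_sub_one, ih, show (central c t : HeisZ n)⁻¹ = central (-c) (-t) by
      ext <;> simp [central], central_mul]
    congr 1 <;> ring

lemma commute_central (c t : ℤ) (x : HeisZ n) : Commute (central c t) x := by
  refine Prod.ext ?_ (mul_comm _ _)
  ext <;> simp [central]; ring

lemma eq_central_of_a_b_eq_zero {x : HeisZ n} (ha : x.1.a = 0) (hb : x.1.b = 0) :
    x = central x.1.c (toAdd x.2) := by
  ext <;> simp [central, ha, hb]

lemma eq_δ₁_zpow_mul_δ₂_zpow_mul_central (x : HeisZ n) :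
    x = δ₁ ^ x.1.a * δ₂ ^ x.1.b * central (x.1.c - n * x.1.a * x.1.b) (toAdd x.2) := by
  refine Prod.ext ?_ ?_
  · simp only [δ₁, δ₂, Prod.fst_mul, Prod.pow_fst, Heis.δ₁_zpow, Heis.δ₂_zpow, central_fst]
    ext <;> simp
  · simp [δ₁, δ₂, central]

lemma commutatorElement_eq (x y : HeisZ n) : ⁅x, y⁆ = central (n * det x y) 0 := by
  refine Prod.ext (Heis.commutatorElement_eq x.1 y.1) ?_
  change ⁅x.2, y.2⁆ = 1
  exact commutatorElement_eq_one_iff_commute.mpr (Commute.all _ _)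

lemma det_δ₁_δ₂ : det (δ₁ : HeisZ n) δ₂ = 1 := by
  simp [det, δ₁, δ₂, Heis.δ₁, Heis.δ₂]

lemma commutatorElement_δ₁_δ₂ : ⁅(δ₁ : HeisZ n), (δ₂ : HeisZ n)⁆ = central n 0 := by
  rw [commutatorElement_eq, det_δ₁_δ₂, mul_one]

lemma a_b_eq_zero_of_commute (hn : n ≠ 0) {w x y : HeisZ n} (hxy : det x y ≠ 0)
    (hx : Commute w x) (hy : Commute w y) : w.1.a = 0 ∧ w.1.b = 0 := by
  have hdet : ∀ {z}, Commute w z → det w z = 0 := fun hz => by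
    rw [← commutatorElement_eq_one_iff_commute, commutatorElement_eq, ← central_one,
      central_inj] at hz
    simpa [hn] using hz.1
  have ex := hdet hx
  have ey := hdet hy
  simp only [det] at ex ey hxy
  refine ⟨(mul_eq_zero.mp ?_).resolve_right hxy, (mul_eq_zero.mp ?_).resolve_right hxy⟩
  · linear_combination x.1.a * ey - y.1.a * ex
  · linear_combination x.1.b * ey - y.1.b * ex

lemma finite_setOf_coords_mem {s : Set (ℤ × ℤ × ℤ × ℤ)} (hs : s.Finite) :
    {g : HeisZ n | (g.1.a, g.1.b, g.1.c, toAdd g.2) ∈ s}.Finite :=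
  hs.preimage fun g _ h _ hgh => by
    simp only [Prod.mk.injEq] at hgh
    exact Prod.ext (Heis.ext hgh.1 hgh.2.1 hgh.2.2.1) (toAdd.injective hgh.2.2.2)

/-- Powers of `u`, `v`, `central c' t` and `central c 0` reduce, in this order, the coordinates
`a`, `b`, `t` and `c` of any element into a box; each step fixes the coordinates already reduced. -/
lemma finite_quotient_of_mem (K : Subgroup (HeisZ n)) {u v : HeisZ n} {c c' t : ℤ}
    (hu : u ∈ K) (hv : v ∈ K) (hq : central c' t ∈ K) (hp : central c 0 ∈ K)
    (hua : u.1.a ≠ 0) (hva : v.1.a = 0) (hvb : v.1.b ≠ 0) (ht : t ≠ 0) (hc : c ≠ 0) :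
    Finite (HeisZ n ⧸ K) := by
  refine QuotientGroup.finite_of_forall_exists_mul_mem K (finite_setOf_coords_mem
    ((Set.finite_Ico 0 (u.1.a.natAbs : ℤ)).prod ((Set.finite_Ico 0 (v.1.b.natAbs : ℤ)).prod
      ((Set.finite_Ico 0 (c.natAbs : ℤ)).prod (Set.finite_Ico 0 (t.natAbs : ℤ)))))) fun g => ?_
  obtain ⟨m₁, h₁⟩ := Int.exists_add_mul_mem_Ico g.1.a hua
  obtain ⟨m₂, h₂⟩ := Int.exists_add_mul_mem_Ico (g * u ^ m₁).1.b hvb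
  obtain ⟨m₃, h₃⟩ := Int.exists_add_mul_mem_Ico (toAdd (g * u ^ m₁ * v ^ m₂).2) ht
  obtain ⟨m₄, h₄⟩ :=
    Int.exists_add_mul_mem_Ico (g * u ^ m₁ * v ^ m₂ * central c' t ^ m₃).1.c hc
  refine ⟨u ^ m₁ * v ^ m₂ * central c' t ^ m₃ * central c 0 ^ m₄, ?_, ?_⟩
  · exact mul_mem (mul_mem (mul_mem (zpow_mem hu _) (zpow_mem hv _)) (zpow_mem hq _))
      (zpow_mem hp _)
  · simp only [← mul_assoc]
    simp [central_zpow, hva] at h₁ h₂ h₃ h₄ ⊢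
    exact ⟨h₁, h₂, h₄, h₃⟩

lemma exists_normal_abelian_index_le (K : Subgroup (HeisZ n)) [K.Normal] (N : ℕ) [NeZero N]
    (hb : ∀ w ∈ K, (N : ℤ) ∣ w.1.b) (hc : ∀ c, (n * N : ℤ) ∣ c → central c 0 ∈ K) :
    ∃ A : Subgroup (HeisZ n ⧸ K), A.Normal ∧ (∀ x y : A, x * y = y * x) ∧ A.index ≤ N := by
  let θ : HeisZ n →* Multiplicative (ZMod N) :=
    MonoidHom.mk' (fun g => ofAdd (g.1.b : ZMod N)) fun g h => by simp [ofAdd_add]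
  have hθ (g : HeisZ n) : θ g = 1 ↔ (N : ℤ) ∣ g.1.b := by
    simp [θ, ZMod.intCast_zmod_eq_zero_iff_dvd]
  let θ' := QuotientGroup.lift K θ fun w hw => (hθ w).2 (hb w hw)
  refine ⟨θ'.ker, inferInstance, ?_, ?_⟩
  · rintro ⟨x, hx⟩ ⟨y, hy⟩
    obtain ⟨g, rfl⟩ := QuotientGroup.mk_surjective x
    obtain ⟨h, rfl⟩ := QuotientGroup.mk_surjective y
    replace hx := (hθ g).1 hx
    replace hy := (hθ h).1 hy
    refine Subtype.ext (commutatorElement_eq_one_iff_mul_comm.mp ?_)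
    change ⁅QuotientGroup.mk' K g, QuotientGroup.mk' K h⁆ = 1
    rw [← map_commutatorElement, QuotientGroup.mk'_apply, QuotientGroup.eq_one_iff,
      commutatorElement_eq]
    exact hc _ (mul_dvd_mul_left _ (dvd_sub (dvd_mul_of_dvd_right hy _)
      (dvd_mul_of_dvd_left hx _)))
  · rw [Subgroup.index_ker]
    calc Nat.card θ'.range ≤ Nat.card (Multiplicative (ZMod N)) := Subgroup.card_le_card_group _
      _ = N := by simp

section Embedding

variable {r rh : ℕ}

lemma map_central_natCast (Φ : HeisZ r →* HeisZ rh) :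
    Φ (central r 0) = central (rh * det (Φ δ₁) (Φ δ₂)) 0 := by
  rw [← commutatorElement_δ₁_δ₂, map_commutatorElement, commutatorElement_eq]

variable {Φ : HeisZ r →* HeisZ rh}

lemma det_map_ne_zero (hr : r ≠ 0) (hΦ : Function.Injective Φ) : det (Φ δ₁) (Φ δ₂) ≠ 0 := by
  intro h
  have h1 : central r 0 = (1 : HeisZ r) :=
    hΦ (by rw [map_central_natCast, h, mul_zero, central_one, map_one])
  rw [← central_one, central_inj] at h1
  exact hr (by exact_mod_cast h1.1)

lemma exists_map_central_eq_central (hr : r ≠ 0) (hrh : rh ≠ 0) (hΦ : Function.Injective Φ)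
    (c t : ℤ) : ∃ c' t', Φ (central c t) = central c' t' := by
  obtain ⟨ha, hb⟩ := a_b_eq_zero_of_commute hrh (det_map_ne_zero hr hΦ)
    ((commute_central c t δ₁).map Φ) ((commute_central c t δ₂).map Φ)
  exact ⟨_, _, eq_central_of_a_b_eq_zero ha hb⟩

lemma exists_map_central (hr : r ≠ 0) (hrh : rh ≠ 0) (hΦ : Function.Injective Φ) :
    ∃ c₀ qc qt : ℤ, qt ≠ 0 ∧ r * c₀ = rh * det (Φ δ₁) (Φ δ₂) ∧
      ∀ c t, Φ (central c t) = central (c * c₀ + t * qc) (t * qt) := by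
  obtain ⟨c₀, t₀, hp⟩ := exists_map_central_eq_central hr hrh hΦ 1 0
  obtain ⟨qc, qt, hq⟩ := exists_map_central_eq_central hr hrh hΦ 0 1
  have hcent (c t : ℤ) : Φ (central c t) = central (c * c₀ + t * qc) (c * t₀ + t * qt) := by
    rw [show (central c t : HeisZ r) = central 1 0 ^ c * central 0 1 ^ t by
        simp [central_zpow, central_mul],
      map_mul, map_zpow, map_zpow, hp, hq, central_zpow, central_zpow, central_mul]
  have hpow := map_central_natCast Φ
  rw [hcent, central_inj] at hpow
  have ht₀ : t₀ = 0 := by simpa [hr] using hpow.2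
  have hrc₀ : r * c₀ = rh * det (Φ δ₁) (Φ δ₂) := by simpa using hpow.1
  refine ⟨c₀, qc, qt, ?_, hrc₀, by simpa [ht₀] using hcent⟩
  intro hqt
  have h : central qc 0 = (central 0 c₀ : HeisZ r) :=
    hΦ (by rw [hcent, hcent, ht₀, hqt]; simp [mul_comm])
  rw [central_inj] at h
  exact mul_ne_zero (Int.natCast_ne_zero.mpr hrh) (det_map_ne_zero hr hΦ)
    (by rw [← hrc₀, ← h.2]; ring)

variable {c₀ qc qt : ℤ}

lemma map_a_b (hcent : ∀ c t, Φ (central c t) = central (c * c₀ + t * qc) (t * qt))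
    (z : HeisZ r) :
    (Φ z).1.a = z.1.a * (Φ δ₁).1.a + z.1.b * (Φ δ₂).1.a ∧
      (Φ z).1.b = z.1.a * (Φ δ₁).1.b + z.1.b * (Φ δ₂).1.b := by
  have h := congrArg Φ (eq_δ₁_zpow_mul_δ₂_zpow_mul_central z)
  rw [map_mul, map_mul, map_zpow, map_zpow, hcent] at h
  rw [h]
  simp

lemma dvd_of_central_mem_range (hr : r ≠ 0) (hΦ : Function.Injective Φ) (hqt : qt ≠ 0)
    (hcent : ∀ c t, Φ (central c t) = central (c * c₀ + t * qc) (t * qt)) {c : ℤ}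
    (h : central c 0 ∈ Φ.range) : c₀ ∣ c := by
  obtain ⟨e, he⟩ := h
  have hcomm (x : HeisZ r) : Commute e x :=
    hΦ (by rw [map_mul, map_mul, he]; exact commute_central c 0 (Φ x))
  obtain ⟨ha, hb⟩ := a_b_eq_zero_of_commute hr (by rw [det_δ₁_δ₂]; exact one_ne_zero)
    (hcomm δ₁) (hcomm δ₂)
  rw [eq_central_of_a_b_eq_zero ha hb, hcent, central_inj] at he
  have ht : toAdd e.2 = 0 := by simpa [hqt] using he.2
  exact ⟨e.1.c, by rw [← he.1, ht]; ring⟩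

lemma dvd_mul_a_b_of_mem_range [Φ.range.Normal] (hr : r ≠ 0) (hΦ : Function.Injective Φ)
    (hqt : qt ≠ 0) (hcent : ∀ c t, Φ (central c t) = central (c * c₀ + t * qc) (t * qt))
    {w : HeisZ rh} (hw : w ∈ Φ.range) : c₀ ∣ rh * w.1.a ∧ c₀ ∣ rh * w.1.b := by
  have hmem (x : HeisZ rh) : c₀ ∣ rh * det w x := by
    have := Subgroup.commutatorElement_mem_of_normal hw x
    rw [commutatorElement_eq] at this
    exact dvd_of_central_mem_range hr hΦ hqt hcent this
  constructor
  · simpa [det, δ₂, Heis.δ₂] using hmem δ₂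
  · simpa [det, δ₁, Heis.δ₁] using hmem δ₁

lemma finite_quotient_of_range_eq (hr : r ≠ 0) (hrh : rh ≠ 0) (hΦ : Function.Injective Φ)
    {K : Subgroup (HeisZ rh)} (hK : Φ.range = K) : Finite (HeisZ rh ⧸ K) := by
  subst hK
  obtain ⟨c₀, qc, qt, hqt, hrc₀, hcent⟩ := exists_map_central hr hrh hΦ
  have hD := det_map_ne_zero hr hΦ
  -- `u` and `v` are mapped to elements with `(a, b) = (D, 0)` and `(0, D)`, by Cramer's rule.
  let u : HeisZ r := (⟨(Φ δ₂).1.b, -(Φ δ₁).1.b, 0⟩, 1)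
  let v : HeisZ r := (⟨-(Φ δ₂).1.a, (Φ δ₁).1.a, 0⟩, 1)
  have hu := (map_a_b hcent u).1
  have hv := map_a_b hcent v
  refine finite_quotient_of_mem _ (c := c₀) ⟨u, rfl⟩ ⟨v, rfl⟩ ⟨central 0 1, hcent 0 1⟩
    ⟨central 1 0, by rw [hcent]; simp⟩ ?_ ?_ ?_ (by simpa using hqt) ?_
  · rw [hu]; convert hD using 1; simp only [det, u]; ring
  · rw [hv.1]; simp only [v]; ring
  · rw [hv.2]; convert hD using 1; simp only [det, v]; ring
  · rintro rfl
    exact mul_ne_zero (Int.natCast_ne_zero.mpr hrh) hD (by rw [← hrc₀, mul_zero])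

lemma exists_normal_abelian_index_le_of_range_eq (hr : r ≠ 0) (hrh : rh ≠ 0)
    (hΦ : Function.Injective Φ) {K : Subgroup (HeisZ rh)} [K.Normal] (hK : Φ.range = K) :
    ∃ A : Subgroup (HeisZ rh ⧸ K), A.Normal ∧ (∀ x y : A, x * y = y * x) ∧ A.index ≤ r := by
  subst hK
  obtain ⟨c₀, qc, qt, hqt, hrc₀, hcent⟩ := exists_map_central hr hrh hΦ
  have hrh' : (rh : ℤ) ≠ 0 := Int.natCast_ne_zero.mpr hrh
  have hdvd {w} (hw : w ∈ Φ.range) := dvd_mul_a_b_of_mem_range hr hΦ hqt hcent hw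
  have hdet_dvd {w} (hw : w ∈ Φ.range) : det (Φ δ₁) (Φ δ₂) ∣ r * w.1.a := by
    have := mul_dvd_mul_left (r : ℤ) (hdvd hw).1
    rwa [hrc₀, mul_left_comm, mul_dvd_mul_iff_left hrh'] at this
  set N := Int.gcd (Φ δ₁).1.b (Φ δ₂).1.b
  have hNr : (N : ℤ) ∣ r :=
    Int.gcd_dvd_of_det_dvd_mul (det_map_ne_zero hr hΦ) (hdet_dvd ⟨δ₁, rfl⟩) (hdet_dvd ⟨δ₂, rfl⟩)
  have : NeZero N := ⟨fun h => hr (by simpa [h] using hNr)⟩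
  have hb {w} (hw : w ∈ Φ.range) : (N : ℤ) ∣ w.1.b := by
    obtain ⟨z, rfl⟩ := hw
    rw [(map_a_b hcent z).2]
    exact dvd_add ((Int.gcd_dvd_left _ _).mul_left _) ((Int.gcd_dvd_right _ _).mul_left _)
  have hc₀ : c₀ ∣ rh * N := by
    rw [show (rh * N : ℤ) = ((rh * (Φ δ₁).1.b).gcd (rh * (Φ δ₂).1.b) : ℕ) by
      simp [Int.gcd_mul_left, N]]
    exact Int.dvd_coe_gcd (hdvd ⟨δ₁, rfl⟩).2 (hdvd ⟨δ₂, rfl⟩).2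
  have hc {c} (h : (rh * N : ℤ) ∣ c) : central c 0 ∈ Φ.range := by
    obtain ⟨k, rfl⟩ := hc₀.trans h
    exact ⟨central k 0, by rw [hcent]; simp [mul_comm]⟩
  obtain ⟨A, hA, hAc, hAi⟩ := exists_normal_abelian_index_le Φ.range N (fun _ => hb) fun _ => hc
  exact ⟨A, hA, hAc, hAi.trans (Nat.le_of_dvd (Nat.pos_of_ne_zero hr) (by exact_mod_cast hNr))⟩

end Embedding

end HeisZ

/-- Lemma A.13: suppose Γ = Γ₀ × Γ₁ with Γ₀ ≅ H(r), Γ₁ ≅ ℤ, is a normal subgroup of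
Γ̂ = Γ̂₀ × Γ̂₁ with Γ̂₀ ≅ H(r̂), Γ̂₁ ≅ ℤ. Then the quotient G = Γ̂/Γ is finite and has
a normal abelian subgroup of index at most r. -/
theorem stmt_19 (r rh : ℕ) (hr : 0 < r) (hrh : 0 < rh)
    (K : Subgroup (Heis rh × Multiplicative ℤ)) [K.Normal]
    (hiso : Nonempty ((Heis r × Multiplicative ℤ) ≃* K)) :
    Finite ((Heis rh × Multiplicative ℤ) ⧸ K) ∧
      ∃ A : Subgroup ((Heis rh × Multiplicative ℤ) ⧸ K),
        A.Normal ∧ (∀ x y : A, x * y = y * x) ∧ A.index ≤ r := by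
  obtain ⟨φ⟩ := hiso
  let Φ : HeisZ r →* HeisZ rh := K.subtype.comp φ.toMonoidHom
  have hΦ : Function.Injective Φ := Subtype.val_injective.comp φ.injective
  have hK : Φ.range = K := by
    rw [MonoidHom.range_comp, MonoidHom.range_eq_top.mpr φ.surjective, ← MonoidHom.range_eq_map,
      Subgroup.range_subtype]
  exact ⟨HeisZ.finite_quotient_of_range_eq hr.ne' hrh.ne' hΦ hK,
    HeisZ.exists_normal_abelian_index_le_of_range_eq hr.ne' hrh.ne' hΦ hK⟩
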